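/- For all positive integers r and t, the strong product T_r ⊠ P_t of the star with r+1 vertices and the path with t vertices admits a (4,⊑_1)-tame S-shaped intersection representation in ℝ³, where S is the set of boxes in ℝ³. -/

import Mathlib

open MeasureTheory Set Pointwise Metric Function
open scoped RealInnerProductSpace ENNReal

noncomputable section

/-- `ℝ^d` as a Euclidean space. -/
abbrev Euc (d : ℕ) := EuclideanSpace ℝ (Fin d)

/-- A shape: a compact set that is non-degenerate, i.e. not contained in a proper
affine subspace. -/
def IsShape {d : ℕ} (B : Set (Euc d)) : Prop :=
  IsCompact B ∧ affineSpan ℝ B = ⊤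

/-- `B₁ ⊑ₛ B₂`: for every `x ∈ B₂` there is a translate `B₁'` of `B₁` with `x ∈ B₁'`
and `vol (B₁' ∩ B₂) ≥ vol B₁ / s`. -/
def SqIn {d : ℕ} (s : ℝ) (B₁ B₂ : Set (Euc d)) : Prop :=
  ∀ x ∈ B₂, ∃ v : Euc d, x ∈ v +ᵥ B₁ ∧
    volume B₁ / ENNReal.ofReal s ≤ volume ((v +ᵥ B₁) ∩ B₂)

/-- `B₁` and `B₂` are `⊑ₛ`-comparable. -/
def SqComparable {d : ℕ} (s : ℝ) (B₁ B₂ : Set (Euc d)) : Prop :=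
  SqIn s B₁ B₂ ∨ SqIn s B₂ B₁

/-- `B₁ ≤ₖ B₂`: some translate of `B₁` is contained in `k • B₂`. -/
def LeK {d : ℕ} (k : ℝ) (B₁ B₂ : Set (Euc d)) : Prop :=
  ∃ v : Euc d, v +ᵥ B₁ ⊆ k • B₂

/-- `B₁ ≤_{k,s} B₂`: for every `x ∈ k • B₂` there are a translate `B₁'` of `B₁` and a
translate `B₁''` of `s • B₁` with `x ∈ B₁''` and `B₁' ⊆ B₁'' ∩ k • B₂`. -/
def LeKS {d : ℕ} (k s : ℝ) (B₁ B₂ : Set (Euc d)) : Prop :=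
  ∀ x ∈ k • B₂, ∃ v w : Euc d,
    x ∈ w +ᵥ (s • B₁) ∧ v +ᵥ B₁ ⊆ (w +ᵥ (s • B₁)) ∩ (k • B₂)

/-- An intersection representation of a graph in `ℝ^d`. -/
def IsIntersectionRep {V : Type*} {d : ℕ} (G : SimpleGraph V) (φ : V → Set (Euc d)) : Prop :=
  (∀ v, (φ v).Nonempty) ∧ ∀ u v : V, u ≠ v → ((φ u ∩ φ v).Nonempty ↔ G.Adj u v)

/-- A representation is `c`-thin if every point lies in at most `c` of the sets. -/
def IsThin {V : Type*} {d : ℕ} (c : ℝ) (φ : V → Set (Euc d)) : Prop :=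
  ∀ x : Euc d, ({v : V | x ∈ φ v}.ncard : ℝ) ≤ c

/-- A `(c,⊑ₛ)`-tame representation. -/
def IsTame {V : Type*} {d : ℕ} (c s : ℝ) (G : SimpleGraph V) (φ : V → Set (Euc d)) : Prop :=
  IsIntersectionRep G φ ∧ IsThin c φ ∧
    (∀ v, Convex ℝ (φ v) ∧ IsShape (φ v)) ∧
    ∀ u v : V, SqComparable s (φ u) (φ v)

/-- An `S`-shaped representation: each vertex is assigned a translate of a shape in `S`. -/
def IsSShaped {V : Type*} {d : ℕ} (S : Set (Set (Euc d))) (φ : V → Set (Euc d)) : Prop :=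
  ∀ v, ∃ B ∈ S, ∃ t : Euc d, φ v = t +ᵥ B

/-- `X` is a balanced separator: every component of `G - X` has at most `(2/3)|V(G)|`
vertices. -/
def IsBalancedSeparator {V : Type*} [Fintype V] (G : SimpleGraph V) (X : Set V) : Prop :=
  ∀ C : (G.induce Xᶜ).ConnectedComponent,
    (C.supp.ncard : ℝ) ≤ 2 / 3 * Fintype.card V

/-- `L_{G,≺,r}(v)`, where the linear ordering `≺` is encoded by an injective `ρ : V → ℕ`:
the set of vertices `x ⪯ v` reachable from `v` by a path of length at most `r` all of whose
internal vertices are `≻ v`. -/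
def Lset {V : Type*} (G : SimpleGraph V) (ρ : V → ℕ) (r : ℕ) (v : V) : Set V :=
  {x | ρ x ≤ ρ v ∧ ∃ p : G.Walk v x, p.IsPath ∧ p.length ≤ r ∧
    ∀ z ∈ p.support, z ≠ v → z ≠ x → ρ v < ρ z}

/-- The height of a set: the least `h ≥ 0` such that the set lies between two parallel
hyperplanes at distance `h`. -/
def heightOf {d : ℕ} (B : Set (Euc d)) : ℝ :=
  sInf {h : ℝ | 0 ≤ h ∧ ∃ u : Euc d, ‖u‖ = 1 ∧ ∃ a : ℝ,
    ∀ x ∈ B, a ≤ (inner ℝ u x : ℝ) ∧ (inner ℝ u x : ℝ) ≤ a + h}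

/-- A parallelepiped with center `p` and sides `v₁, …, v_d`. -/
def IsParallelepiped {d : ℕ} (T : Set (Euc d)) : Prop :=
  ∃ (p : Euc d) (v : Fin d → Euc d), LinearIndependent ℝ v ∧
    T = {x | ∃ α : Fin d → ℝ, (∀ i, α i ∈ Set.Icc (-1 : ℝ) 1) ∧ x = p + ∑ i, α i • v i}

/-- `T` is an envelope of `B`: a parallelepiped of smallest volume containing `B`. -/
def IsEnvelope {d : ℕ} (T B : Set (Euc d)) : Prop :=
  IsParallelepiped T ∧ B ⊆ T ∧
    ∀ T' : Set (Euc d), IsParallelepiped T' → B ⊆ T' → volume T ≤ volume T'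

/-- A box in `ℝ^d`: a product of `d` closed intervals. -/
def IsBox {d : ℕ} (B : Set (Euc d)) : Prop :=
  ∃ a b : Fin d → ℝ, B = {x : Euc d | ∀ i, x i ∈ Set.Icc (a i) (b i)}

/-- `Q` is `k'`-fat: every ball `B` centered in `Q` satisfies
`vol (B ∩ Q) ≥ min (vol B / k') (vol Q)`. -/
def IsFat {d : ℕ} (k' : ℝ) (Q : Set (Euc d)) : Prop :=
  ∀ x ∈ Q, ∀ ρ : ℝ, 0 < ρ →
    min (volume (Metric.closedBall x ρ) / ENNReal.ofReal k') (volume Q)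
      ≤ volume (Metric.closedBall x ρ ∩ Q)

/-- The strong product of two simple graphs. -/
def strongProd {α β : Type*} (G : SimpleGraph α) (H : SimpleGraph β) :
    SimpleGraph (α × β) where
  Adj x y := x ≠ y ∧ (x.1 = y.1 ∨ G.Adj x.1 y.1) ∧ (x.2 = y.2 ∨ H.Adj x.2 y.2)
  symm := ⟨by
    rintro ⟨a1, a2⟩ ⟨b1, b2⟩ ⟨hne, h1, h2⟩
    refine ⟨hne.symm, ?_, ?_⟩
    · rcases h1 with h | h
      · exact Or.inl h.symm
      · exact Or.inr h.symm
    · rcases h2 with h | h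
      · exact Or.inl h.symm
      · exact Or.inr h.symm⟩
  loopless := ⟨by
    rintro ⟨a1, a2⟩ ⟨hne, -, -⟩
    exact hne rfl⟩

/-- The graph `G⁺(N, l)`: add hubs `v₁, …, v_N` and internally disjoint paths of length `l`
from each hub to each vertex of `G`.  The internal vertices of the path from hub `i` to
vertex `u` are `(i, u, 0), …, (i, u, l-2)`. -/
def plusGraph {V : Type*} (G : SimpleGraph V) (N l : ℕ) :
    SimpleGraph (V ⊕ (Fin N ⊕ Fin N × V × Fin (l - 1))) :=
  SimpleGraph.fromRel (fun x y =>
    match x, y with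
    | Sum.inl u, Sum.inl w => G.Adj u w
    | Sum.inr (Sum.inl _), Sum.inl _ => l = 1
    | Sum.inr (Sum.inl i), Sum.inr (Sum.inr (j, _, t)) => i = j ∧ (t : ℕ) = 0
    | Sum.inr (Sum.inr (i, u, t)), Sum.inr (Sum.inr (j, w, t')) =>
        i = j ∧ u = w ∧ (t' : ℕ) = (t : ℕ) + 1
    | Sum.inr (Sum.inr (_, u, t)), Sum.inl w => u = w ∧ (t : ℕ) = l - 2
    | _, _ => False)

/-- `γ_d`: the supremum over affine hyperplanes `H` of the `(d-1)`-dimensional Hausdorff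
measure of the intersection of `H` with the unit cube. -/
def gammaConst (d : ℕ) : ℝ :=
  sSup {γ : ℝ | ∃ (u : Euc d) (a : ℝ), ‖u‖ = 1 ∧
    γ = (MeasureTheory.Measure.hausdorffMeasure ((d : ℝ) - 1)
      ({x : Euc d | (inner ℝ u x : ℝ) = a} ∩ {x : Euc d | ∀ i, x i ∈ Set.Icc (0 : ℝ) 1})).toReal}

/-- The sequence `ℓ_h`: `ℓ_1 = 1` and `ℓ_{h+1} = ℓ_h / (2(h+1))`. -/
def ellSeq : ℕ → ℝ
  | 0 => 2
  | n + 1 => ellSeq n / (2 * (n + 1))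

/-- The trapezoid `T_h` with vertices `(0,0)`, `(ℓ_h,0)`, `(ℓ_h, hℓ_h)`, `(0, 2hℓ_h)`. -/
def trapezoidShape (h : ℕ) : Set (Euc 2) :=
  convexHull ℝ {(!₂[0, 0] : Euc 2), !₂[ellSeq h, 0], !₂[ellSeq h, h * ellSeq h],
    !₂[0, 2 * h * ellSeq h]}

/-- An axis-aligned square `S_h` with sides of length `ℓ_h`. -/
def squareShape (h : ℕ) : Set (Euc 2) :=
  {x : Euc 2 | x 0 ∈ Set.Icc 0 (ellSeq h) ∧ x 1 ∈ Set.Icc 0 (ellSeq h)}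

/-- The set `S*` of shapes. -/
def SStar : Set (Set (Euc 2)) :=
  {B | ∃ h : ℕ, 0 < h ∧ (B = trapezoidShape h ∨ B = squareShape h)}

/-- A class of finite graphs is `⊑`-representable. -/
def SqRepresentable (𝒢 : ∀ V : Type, Fintype V → SimpleGraph V → Prop) : Prop :=
  ∃ d c s : ℕ, 0 < d ∧ 0 < c ∧ 0 < s ∧
    ∀ (V : Type) (instV : Fintype V) (G : SimpleGraph V), 𝒢 V instV G →
      ∃ S : Set (Set (Euc d)), (∀ B ∈ S, Convex ℝ B ∧ IsShape B) ∧
        S.Pairwise (SqComparable (s : ℝ)) ∧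
        ∃ φ : V → Set (Euc d), IsIntersectionRep G φ ∧ IsThin (c : ℝ) φ ∧ IsSShaped S φ

end

/-! The star and the path are interval graphs: the centre of `T_r` is `[0, 2r+1]`, leaf `i` is
`[2i, 2i+1]`, and vertex `j` of `P_t` is `[j, j+1]`. Taking products of these intervals, with a
dummy unit third side to make the boxes full-dimensional, gives boxes whose intersection graph is
exactly `T_r ⊠ P_t`. The boxes through a point pairwise meet, so they form a clique, and the
product of the two bicolourings bounds their number by `4`. Only the first side length varies,
so of any two boxes one is shorter than the other in every direction, and some translate of it
inside the other covers any prescribed point; this gives `⊑₁`-comparability. -/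

section Boxes

variable {d : ℕ}

def box (a b : Fin d → ℝ) : Set (Euc d) := {x | ∀ i, x i ∈ Icc (a i) (b i)}

lemma isBox_box (a b : Fin d → ℝ) : IsBox (box a b) := ⟨a, b, rfl⟩

lemma convex_box (a b : Fin d → ℝ) : Convex ℝ (box a b) := by
  intro x hx y hy p q hp hq hpq i
  exact convex_Icc (a i) (b i) (hx i) (hy i) hp hq hpq

lemma box_eq_preimage_pi (a b : Fin d → ℝ) :
    box a b = EuclideanSpace.equiv (Fin d) ℝ ⁻¹' univ.pi fun i => Icc (a i) (b i) := by
  ext x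
  simp only [mem_preimage, mem_univ_pi]
  rfl

lemma isCompact_box (a b : Fin d → ℝ) : IsCompact (box a b) := by
  rw [box_eq_preimage_pi]
  exact (EuclideanSpace.equiv (Fin d) ℝ).toHomeomorph.isCompact_preimage.2
    (isCompact_univ_pi fun i => isCompact_Icc)

lemma affineSpan_box {a b : Fin d → ℝ} (h : ∀ i, a i < b i) : affineSpan ℝ (box a b) = ⊤ := by
  set U : Set (Euc d) := EuclideanSpace.equiv (Fin d) ℝ ⁻¹' univ.pi fun i => Ioo (a i) (b i)
  have hU : IsOpen U :=
    (isOpen_set_pi finite_univ fun i _ => isOpen_Ioo).preimage (ContinuousLinearEquiv.continuous _)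
  have hUne : U.Nonempty :=
    ⟨WithLp.toLp 2 fun i => (a i + b i) / 2, fun i _ => by
      change (a i + b i) / 2 ∈ Ioo (a i) (b i)
      constructor <;> linarith [h i]⟩
  exact top_unique <| hU.affineSpan_eq_top hUne ▸
    affineSpan_mono ℝ fun x hx i => Ioo_subset_Icc_self (hx i (mem_univ i))

lemma isShape_box {a b : Fin d → ℝ} (h : ∀ i, a i < b i) : IsShape (box a b) :=
  ⟨isCompact_box a b, affineSpan_box h⟩

lemma box_inter_box_nonempty_iff {a b a' b' : Fin d → ℝ} :
    (box a b ∩ box a' b').Nonempty ↔ ∀ i, (Icc (a i) (b i) ∩ Icc (a' i) (b' i)).Nonempty := by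
  refine ⟨fun ⟨x, hx, hx'⟩ i => ⟨x i, hx i, hx' i⟩, fun h => ?_⟩
  choose x hx using h
  exact ⟨WithLp.toLp 2 x, fun i => (hx i).1, fun i => (hx i).2⟩

lemma vadd_box (v : Euc d) (a b : Fin d → ℝ) :
    v +ᵥ box a b = box (fun i => v i + a i) (fun i => v i + b i) := by
  ext x
  simp only [mem_vadd_set_iff_neg_vadd_mem, box, mem_Icc]
  refine forall_congr' fun i => ?_
  change a i ≤ -v i + x i ∧ -v i + x i ≤ b i ↔ _
  constructor <;> rintro ⟨h₁, h₂⟩ <;> constructor <;> linarith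

lemma sqIn_one_of_forall_exists_vadd_subset {B₁ B₂ : Set (Euc d)}
    (h : ∀ x ∈ B₂, ∃ v : Euc d, x ∈ v +ᵥ B₁ ∧ v +ᵥ B₁ ⊆ B₂) : SqIn 1 B₁ B₂ := by
  intro x hx
  obtain ⟨v, hxv, hsub⟩ := h x hx
  refine ⟨v, hxv, ?_⟩
  rw [inter_eq_left.2 hsub, measure_vadd, ENNReal.ofReal_one, div_one]

lemma exists_Icc_add_subset {a b c e x : ℝ} (hab : a ≤ b) (hlen : b - a ≤ e - c)
    (hx : x ∈ Icc c e) : ∃ s, x ∈ Icc (s + a) (s + b) ∧ Icc (s + a) (s + b) ⊆ Icc c e := by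
  refine ⟨min (x - a) (e - b), ⟨?_, ?_⟩, Icc_subset_Icc ?_ ?_⟩
  all_goals
    rcases min_cases (x - a) (e - b) with ⟨h, _⟩ | ⟨h, _⟩ <;> rw [h] <;> linarith [hx.1, hx.2]

lemma sqIn_one_box {a b c e : Fin d → ℝ} (hab : ∀ i, a i ≤ b i)
    (hlen : ∀ i, b i - a i ≤ e i - c i) : SqIn 1 (box a b) (box c e) := by
  refine sqIn_one_of_forall_exists_vadd_subset fun x hx => ?_
  choose s hs using fun i => exists_Icc_add_subset (hab i) (hlen i) (hx i)
  refine ⟨WithLp.toLp 2 s, ?_, ?_⟩ <;> rw [vadd_box]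
  · exact fun i => (hs i).1
  · exact fun y hy i => (hs i).2 (hy i)

end Boxes

lemma Icc_inter_Icc_nonempty_iff {α : Type*} [LinearOrder α] {a b c e : α} (hab : a ≤ b)
    (hce : c ≤ e) : (Icc a b ∩ Icc c e).Nonempty ↔ c ≤ b ∧ a ≤ e := by
  rw [Icc_inter_Icc, nonempty_Icc]
  simp [hab, hce]

section Graphs

variable {α β : Type*} {G : SimpleGraph α} {H : SimpleGraph β}

lemma IsIntersectionRep.isThin_of_coloring {d : ℕ} {φ : α → Set (Euc d)} {γ : Type*} [Fintype γ]
    (hφ : IsIntersectionRep G φ) (C : G.Coloring γ) : IsThin (Fintype.card γ) φ := by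
  intro x
  have hinj : InjOn C {v | x ∈ φ v} := fun u hu v hv hC => by
    by_contra hne
    exact C.valid ((hφ.2 u v hne).1 ⟨x, hu, hv⟩) hC
  have := ncard_le_ncard_of_injOn C (fun _ _ => mem_univ _) hinj (toFinite _)
  rw [ncard_univ, Nat.card_eq_fintype_card] at this
  exact_mod_cast this

def SimpleGraph.Coloring.strongProd {γ δ : Type*} (C : G.Coloring γ) (D : H.Coloring δ) :
    (strongProd G H).Coloring (γ × δ) :=
  SimpleGraph.Coloring.mk (fun p => (C p.1, D p.2)) fun {_ _} ⟨hne, h₁, h₂⟩ hCD => hne <|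
    Prod.ext (h₁.resolve_right fun h => C.valid h (congrArg Prod.fst hCD))
      (h₂.resolve_right fun h => D.valid h (congrArg Prod.snd hCD))

structure IsIntervalModel (G : SimpleGraph α) (lo hi : α → ℝ) : Prop where
  lo_lt_hi : ∀ a, lo a < hi a
  inter_nonempty_iff : ∀ a b, (Icc (lo a) (hi a) ∩ Icc (lo b) (hi b)).Nonempty ↔ a = b ∨ G.Adj a b

lemma isIntervalModel_star (r : ℕ) :
    IsIntervalModel (completeBipartiteGraph (Fin 1) (Fin r))
      (Sum.elim (fun _ => 0) fun i => 2 * (i : ℝ))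
      (Sum.elim (fun _ => 2 * r + 1) fun i => 2 * (i : ℝ) + 1) := by
  have leaf_le (i : Fin r) : 2 * (i : ℝ) + 1 ≤ 2 * r + 1 := by
    have : (i : ℝ) ≤ r := by exact_mod_cast i.isLt.le
    linarith
  have lo_lt_hi : ∀ a : Fin 1 ⊕ Fin r,
      Sum.elim (fun _ => (0 : ℝ)) (fun i : Fin r => 2 * (i : ℝ)) a <
        Sum.elim (fun _ => 2 * (r : ℝ) + 1) (fun i : Fin r => 2 * (i : ℝ) + 1) a := by
    rintro (_ | i)
    · simp only [Sum.elim_inl]; positivity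
    · simp
  refine ⟨lo_lt_hi, fun a b => ?_⟩
  rw [Icc_inter_Icc_nonempty_iff (lo_lt_hi a).le (lo_lt_hi b).le]
  rcases a with a | i <;> rcases b with b | j <;> simp only [Sum.elim_inl, Sum.elim_inr]
  · exact iff_of_true ⟨by positivity, by positivity⟩ (.inl (by rw [Subsingleton.elim a b]))
  · exact iff_of_true ⟨by linarith [leaf_le j], by positivity⟩ (.inr (by simp))
  · exact iff_of_true ⟨by positivity, by linarith [leaf_le i]⟩ (.inr (by simp))
  · rw [or_iff_left (by simp), Sum.inr.injEq, Fin.ext_iff]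
    norm_cast
    omega

lemma isIntervalModel_path (t : ℕ) :
    IsIntervalModel (SimpleGraph.pathGraph t) (fun j => (j : ℝ)) (fun j => (j : ℝ) + 1) := by
  refine ⟨fun j => lt_add_one _, fun j j' => ?_⟩
  rw [Icc_inter_Icc_nonempty_iff (by linarith) (by linarith), SimpleGraph.pathGraph_adj,
    Fin.ext_iff]
  norm_cast
  omega

variable {lo hi : α → ℝ} {lo' hi' : β → ℝ}

def prodBox (lo hi : α → ℝ) (lo' hi' : β → ℝ) (p : α × β) : Set (Euc 3) :=
  box ![lo p.1, lo' p.2, 0] ![hi p.1, hi' p.2, 1]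

lemma prodBox_inter_nonempty_iff {p q : α × β} :
    (prodBox lo hi lo' hi' p ∩ prodBox lo hi lo' hi' q).Nonempty ↔
      (Icc (lo p.1) (hi p.1) ∩ Icc (lo q.1) (hi q.1)).Nonempty ∧
        (Icc (lo' p.2) (hi' p.2) ∩ Icc (lo' q.2) (hi' q.2)).Nonempty := by
  simp [prodBox, box_inter_box_nonempty_iff, Fin.forall_fin_succ]

lemma isIntersectionRep_prodBox (hG : IsIntervalModel G lo hi) (hH : IsIntervalModel H lo' hi') :
    IsIntersectionRep (strongProd G H) (prodBox lo hi lo' hi') := by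
  refine ⟨fun p => ?_, fun p q hpq => ?_⟩
  · simpa using prodBox_inter_nonempty_iff.2
      ⟨(hG.inter_nonempty_iff p.1 p.1).2 (.inl rfl), (hH.inter_nonempty_iff p.2 p.2).2 (.inl rfl)⟩
  · rw [prodBox_inter_nonempty_iff, hG.inter_nonempty_iff, hH.inter_nonempty_iff]
    exact ⟨fun h => ⟨hpq, h⟩, fun h => h.2⟩

lemma isShape_prodBox (hG : IsIntervalModel G lo hi) (hH : IsIntervalModel H lo' hi') (p : α × β) :
    IsShape (prodBox lo hi lo' hi' p) :=
  isShape_box fun i => by fin_cases i <;> simp [hG.lo_lt_hi, hH.lo_lt_hi]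

lemma sqIn_one_prodBox (hG : IsIntervalModel G lo hi) (hH : IsIntervalModel H lo' hi')
    (hwidth : ∀ b b', hi' b - lo' b = hi' b' - lo' b') {p q : α × β}
    (h : hi p.1 - lo p.1 ≤ hi q.1 - lo q.1) :
    SqIn 1 (prodBox lo hi lo' hi' p) (prodBox lo hi lo' hi' q) := by
  refine sqIn_one_box (fun i => ?_) fun i => ?_ <;> fin_cases i <;>
    simp [h, hwidth p.2 q.2, (hG.lo_lt_hi _).le, (hH.lo_lt_hi _).le]

lemma sqComparable_prodBox (hG : IsIntervalModel G lo hi) (hH : IsIntervalModel H lo' hi')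
    (hwidth : ∀ b b', hi' b - lo' b = hi' b' - lo' b') (p q : α × β) :
    SqComparable 1 (prodBox lo hi lo' hi' p) (prodBox lo hi lo' hi' q) :=
  (le_total _ _).imp (sqIn_one_prodBox hG hH hwidth) (sqIn_one_prodBox hG hH hwidth)

end Graphs

theorem stmt11_general (r t : ℕ) :
    ∃ φ : (Fin 1 ⊕ Fin r) × Fin t → Set (Euc 3),
      IsTame 4 1
        (strongProd (completeBipartiteGraph (Fin 1) (Fin r)) (SimpleGraph.pathGraph t)) φ ∧
      IsSShaped {B : Set (Euc 3) | IsBox B} φ := by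
  have hG := isIntervalModel_star r
  have hH := isIntervalModel_path t
  have hφ := isIntersectionRep_prodBox hG hH
  have hthin := hφ.isThin_of_coloring
    ((SimpleGraph.CompleteBipartiteGraph.bicoloring _ _).strongProd
      (SimpleGraph.pathGraph.bicoloring t))
  refine ⟨prodBox _ _ _ _, ⟨hφ, by simpa using hthin,
    fun p => ⟨convex_box _ _, isShape_prodBox hG hH p⟩,
    sqComparable_prodBox hG hH fun _ _ => by ring⟩,
    fun _ => ⟨_, isBox_box _ _, 0, (zero_vadd _ _).symm⟩⟩

theorem stmt11 (r t : ℕ) (hr : 0 < r) (ht : 0 < t) :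
    ∃ φ : (Fin 1 ⊕ Fin r) × Fin t → Set (Euc 3),
      IsTame 4 1
        (strongProd (completeBipartiteGraph (Fin 1) (Fin r)) (SimpleGraph.pathGraph t)) φ ∧
      IsSShaped {B : Set (Euc 3) | IsBox B} φ :=
  stmt11_general r t
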